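/- arXiv:math/0301205 — 3 statements merged into one kernel-verified Lean document; each statement's English description precedes it below -/
import Mathlib

section
/- Let G be a virtually cyclic group. Then G contains a finite normal subgroup F such that G/F is either trivial, infinite cyclic, or infinite dihedral. -/
/-!
Passing to the normal core gives an element `z` of infinite order such that `⟨z⟩` is normal of
finite index. Conjugation induces an automorphism of `⟨z⟩ ≅ ℤ`, so every element conjugates `z`
to `z` or `z⁻¹`, and the centralizer `K` of `z` has index at most two. In `K` the subgroup `⟨z⟩` is
central of finite index, so the transfer `K → ⟨z⟩ ≅ ℤ` is `g ↦ g ^ [K : ⟨z⟩]`; its kernel is the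
set `F` of elements of finite order of `K`. Hence `F` is a subgroup, normal in `G`, and finite
because it meets `⟨z⟩` trivially. In `G/F` the image of `K` embeds in `ℤ` and is infinite, and any
element outside it inverts it and has square in it, hence of order two: `G/F` is `ℤ` or `D∞`.
-/

open Subgroup

section

variable {Q : Type*} [Group Q] {a t x : Q}

theorem isOfFinOrder_of_eq_inv (h : x = x⁻¹) : IsOfFinOrder x :=
  isOfFinOrder_iff_pow_eq_one.mpr ⟨2, two_pos, by rw [sq, ← mul_inv_cancel x, ← h]⟩

theorem eq_one_of_mem_zpowers_of_isOfFinOrder (ha : ¬IsOfFinOrder a) (hx : x ∈ zpowers a)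
    (hfin : IsOfFinOrder x) : x = 1 := by
  obtain ⟨k, rfl⟩ := mem_zpowers_iff.mp hx
  obtain ⟨n, hn, hkn⟩ := isOfFinOrder_iff_pow_eq_one.mp hfin
  have hk : k * n = 0 := injective_zpow_iff_not_isOfFinOrder.mpr ha <| by
    simpa [zpow_mul] using hkn
  simp [(mul_eq_zero.mp hk).resolve_right (by exact_mod_cast hn.ne')]

theorem conj_eq_or_eq_inv_of_zpowers_normal (ha : ¬IsOfFinOrder a) [(zpowers a).Normal] (g : Q) :
    g * a * g⁻¹ = a ∨ g * a * g⁻¹ = a⁻¹ := by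
  obtain ⟨k, hk⟩ := mem_zpowers_iff.mp (Normal.conj_mem ‹_› a (mem_zpowers a) g)
  obtain ⟨l, hl⟩ := mem_zpowers_iff.mp (Normal.conj_mem ‹_› a (mem_zpowers a) g⁻¹)
  have hlk : l * k = 1 := injective_zpow_iff_not_isOfFinOrder.mpr ha <| by
    simp only [zpow_mul, hl, conj_zpow, hk]
    group
  rcases Int.eq_one_or_neg_one_of_mul_eq_one' hlk with ⟨-, rfl⟩ | ⟨-, rfl⟩ <;> simp [← hk]

theorem conj_eq_inv_of_mem_zpowers (hta : t * a * t⁻¹ = a⁻¹) (hx : x ∈ zpowers a) :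
    t * x * t⁻¹ = x⁻¹ := by
  obtain ⟨k, rfl⟩ := mem_zpowers_iff.mp hx
  rw [← conj_zpow, hta, inv_zpow]

theorem nonempty_mulEquiv_dihedralGroup_zero (ha : ¬IsOfFinOrder a) (ht : t * t = 1)
    (hta : t * a * t⁻¹ = a⁻¹) (htA : t ∉ zpowers a)
    (hcover : ∀ q ∉ zpowers a, t⁻¹ * q ∈ zpowers a) : Nonempty (Q ≃* DihedralGroup 0) := by
  have hcomm (k : ℤ) : a ^ k * t = t * a ^ (-k) := by
    rw [← eq_mul_inv_iff_mul_eq, conj_eq_inv_of_mem_zpowers hta (zpow_mem_zpowers a _), zpow_neg,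
      inv_inv]
  let f : DihedralGroup 0 →* Q := MonoidHom.mk'
    (fun | .r i => a ^ (i.cast : ℤ) | .sr i => t * a ^ (i.cast : ℤ)) <| by
      rintro (i | i) (j | j) <;>
        simp only [DihedralGroup.r_mul_r, DihedralGroup.r_mul_sr, DihedralGroup.sr_mul_r,
          DihedralGroup.sr_mul_sr, ZMod.cast_add dvd_rfl, ZMod.cast_sub dvd_rfl]
      · rw [zpow_add]
      · rw [← mul_assoc, hcomm, mul_assoc, ← zpow_add, neg_add_eq_sub]
      · rw [zpow_add, mul_assoc]
      · rw [mul_assoc, ← mul_assoc (a ^ _) t, hcomm, ← mul_assoc, ← mul_assoc, ht, one_mul,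
          ← zpow_add, neg_add_eq_sub]
  have hinj : Function.Injective f := by
    refine (injective_iff_map_eq_one f).mpr ?_
    rintro (i | i) h
    · have hi : (i.cast : ℤ) = 0 :=
        injective_zpow_iff_not_isOfFinOrder.mpr ha (h.trans (zpow_zero a).symm)
      rw [← ZMod.intCast_zmod_cast i, hi, Int.cast_zero, DihedralGroup.r_zero]
    · exact absurd (mem_zpowers_iff.mpr ⟨-(i.cast : ℤ), by
        rw [zpow_neg]; exact (eq_inv_of_mul_eq_one_left h).symm⟩) htA
  have hsurj : Function.Surjective f := by
    intro q
    by_cases hq : q ∈ zpowers a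
    · obtain ⟨k, rfl⟩ := mem_zpowers_iff.mp hq
      exact ⟨.r (Int.cast k), by simp [f]⟩
    · obtain ⟨k, hk⟩ := mem_zpowers_iff.mp (hcover q hq)
      exact ⟨.sr (Int.cast k), by simp [f, hk]⟩
  exact ⟨(MulEquiv.ofBijective f ⟨hinj, hsurj⟩).symm⟩

theorem nonempty_mulEquiv_int_or_dihedralGroup_zero (A : Subgroup Q) [IsCyclic A] [A.Normal]
    {b : Q} (hbA : b ∈ A) (hb : ¬IsOfFinOrder b) (hinv : ∀ q ∉ A, q * b * q⁻¹ = b⁻¹)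
    (hindex : ∀ q q', q ∉ A → q' ∉ A → q⁻¹ * q' ∈ A) :
    Nonempty (Q ≃* Multiplicative ℤ) ∨ Nonempty (Q ≃* DihedralGroup 0) := by
  obtain ⟨a, rfl⟩ := A.isCyclic_iff_exists_zpowers_eq_top.mp ‹_›
  have ha : ¬IsOfFinOrder a := fun h => hb (h.of_mem_zpowers hbA)
  by_cases htop : ∀ q, q ∈ zpowers a
  · have : Infinite Q := Infinite.of_injective _ (injective_zpow_iff_not_isOfFinOrder.mpr ha)
    exact Or.inl ⟨(intEquivOfZPowersEqTop a (eq_top_iff.mpr fun q _ => htop q)).symm⟩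
  obtain ⟨t, ht⟩ := not_forall.mp htop
  have hta : t * a * t⁻¹ = a⁻¹ := by
    refine (conj_eq_or_eq_inv_of_zpowers_normal ha t).resolve_left fun h => hb ?_
    obtain ⟨k, rfl⟩ := mem_zpowers_iff.mp hbA
    exact isOfFinOrder_of_eq_inv (by rw [← hinv t ht, ← conj_zpow, h])
  have htt : t * t ∈ zpowers a := by simpa using hindex t⁻¹ t (by simpa using ht) ht
  refine Or.inr (nonempty_mulEquiv_dihedralGroup_zero ha ?_ hta ht (hindex t · ht))
  refine eq_one_of_mem_zpowers_of_isOfFinOrder ha htt (isOfFinOrder_of_eq_inv ?_)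
  rw [← conj_eq_inv_of_mem_zpowers hta htt]
  group

end

theorem exists_monoidHom_int_eq_one_iff_isOfFinOrder {K : Type*} [Group K] (Z : Subgroup K)
    [IsCyclic Z] [Infinite Z] [Z.FiniteIndex] (hZ : Z ≤ center K) :
    ∃ τ : K →* Multiplicative ℤ, ∀ g, τ g = 1 ↔ IsOfFinOrder g := by
  let ϕ : Z ≃* Multiplicative ℤ := intCyclicMulEquiv.symm
  refine ⟨MonoidHom.transfer ϕ.toMonoidHom, fun g => ⟨fun h => ?_, fun h => ?_⟩⟩
  · rw [MonoidHom.transfer_eq_pow ϕ.toMonoidHom g fun k g₀ hk =>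
      mul_right_cancel (b := g₀) (by rw [← mem_center_iff.mp (hZ hk) g₀]; group)] at h
    refine isOfFinOrder_iff_pow_eq_one.mpr
      ⟨Z.index, Nat.pos_of_ne_zero FiniteIndex.index_ne_zero, by simpa using h⟩
  · exact (isOfFinOrder_iff_eq_one _).mp (MonoidHom.isOfFinOrder _ h)

section

variable {G : Type*} [Group G]

theorem finite_of_forall_isOfFinOrder {N F : Subgroup G} [N.FiniteIndex]
    (hN : ∀ x ∈ N, IsOfFinOrder x → x = 1) (hF : ∀ x ∈ F, IsOfFinOrder x) : Finite F := by
  refine Finite.of_injective (fun x : F => (x : G ⧸ N)) fun x y hxy => Subtype.ext ?_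
  have hxy : (x : G)⁻¹ * y ∈ N := QuotientGroup.eq.mp hxy
  exact inv_mul_eq_one.mp (hN _ hxy (hF _ (F.mul_mem (F.inv_mem x.2) y.2)))

theorem isCyclic_map_mk'_of_forall_mem_iff {K F : Subgroup G} [F.Normal] {C : Type*} [Group C]
    [IsCyclic C] (τ : K →* C) (hF : ∀ g : K, (g : G) ∈ F ↔ τ g = 1) :
    IsCyclic (K.map (QuotientGroup.mk' F)) := by
  let ρ := (QuotientGroup.mk' F).comp K.subtype
  have hker : τ.ker = ρ.ker := by
    ext g
    simp [ρ, hF]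
  rw [← range_subtype K, ← MonoidHom.range_comp]
  exact isCyclic_of_surjective ((QuotientGroup.quotientKerEquivRange τ).symm.trans
    ((QuotientGroup.quotientMulEquivOfEq hker).trans (QuotientGroup.quotientKerEquivRange ρ)))
    (MulEquiv.surjective _)

theorem exists_zpowers_normal_finiteIndex [Infinite G]
    (hvc : ∃ H : Subgroup G, IsCyclic H ∧ H.FiniteIndex) :
    ∃ z : G, ¬IsOfFinOrder z ∧ (zpowers z).Normal ∧ (zpowers z).FiniteIndex := by
  obtain ⟨H, _, _⟩ := hvc
  obtain ⟨z, hz⟩ := H.normalCore.isCyclic_iff_exists_zpowers_eq_top.mp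
    (isCyclic_of_le H.normalCore_le)
  refine ⟨z, fun hfin => ?_, hz ▸ H.normalCore_normal, hz ▸ inferInstance⟩
  have : Finite (zpowers z) := (finite_zpowers.mpr hfin).to_subtype
  have : Finite G := (finite_iff_finite_and_finiteIndex (zpowers z)).mpr ⟨this, hz ▸ inferInstance⟩
  exact not_finite G

variable {z : G}

theorem mem_centralizer_zpowers_iff {g : G} : g ∈ centralizer (zpowers z) ↔ g * z = z * g := by
  rw [zpowers_eq_closure, centralizer_closure, mem_centralizer_singleton_iff]

theorem conj_eq_inv_of_notMem_centralizer (hz : ¬IsOfFinOrder z) [(zpowers z).Normal] {g : G}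
    (hg : g ∉ centralizer (zpowers z)) : g * z * g⁻¹ = z⁻¹ :=
  (conj_eq_or_eq_inv_of_zpowers_normal hz g).resolve_left fun h =>
    hg (mem_centralizer_zpowers_iff.mpr (by rw [← mul_inv_eq_iff_eq_mul, h]))

theorem inv_mul_mem_centralizer_of_notMem (hz : ¬IsOfFinOrder z) [(zpowers z).Normal]
    {g g' : G} (hg : g ∉ centralizer (zpowers z)) (hg' : g' ∉ centralizer (zpowers z)) :
    g⁻¹ * g' ∈ centralizer (zpowers z) := by
  rw [mem_centralizer_zpowers_iff]
  calc g⁻¹ * g' * z = g⁻¹ * (g' * z * g'⁻¹) * g' := by group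
    _ = g⁻¹ * (g * z * g⁻¹) * g' := by
      rw [conj_eq_inv_of_notMem_centralizer hz hg, conj_eq_inv_of_notMem_centralizer hz hg']
    _ = z * (g⁻¹ * g') := by group

theorem exists_normal_mem_iff_mem_centralizer_isOfFinOrder (hz : ¬IsOfFinOrder z)
    [(zpowers z).Normal] [(zpowers z).FiniteIndex] :
    ∃ (F : Subgroup G) (_ : F.Normal),
      (∀ g, g ∈ F ↔ g ∈ centralizer (zpowers z) ∧ IsOfFinOrder g) ∧
      IsCyclic ((centralizer (zpowers z)).map (QuotientGroup.mk' F)) := by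
  set K := centralizer (zpowers z : Set G)
  have hle : zpowers z ≤ K := le_centralizer (zpowers z)
  let e := subgroupOfEquivOfLe hle
  have : Infinite ((zpowers z).subgroupOf K) :=
    e.toEquiv.infinite_iff.mpr (infinite_zpowers.mpr hz).to_subtype
  have : IsCyclic ((zpowers z).subgroupOf K) := e.symm.isCyclic.mp inferInstance
  obtain ⟨τ, hτ⟩ := exists_monoidHom_int_eq_one_iff_isOfFinOrder ((zpowers z).subgroupOf K)
    fun x hx => mem_center_iff.mpr fun y => Subtype.ext (y.2 _ hx).symm
  set F := τ.ker.map K.subtype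
  have hF (g : G) : g ∈ F ↔ g ∈ K ∧ IsOfFinOrder g := by
    constructor
    · rintro ⟨g, hg, rfl⟩
      exact ⟨g.2, Submonoid.isOfFinOrder_coe.mpr ((hτ g).mp hg)⟩
    · rintro ⟨hgK, hg⟩
      exact ⟨⟨g, hgK⟩, (hτ _).mpr (Submonoid.isOfFinOrder_coe.mp hg), rfl⟩
  have : F.Normal := ⟨fun g hg x => by
    rw [hF] at hg ⊢
    exact ⟨Normal.conj_mem inferInstance g hg.1 x, (isConj_iff.mpr ⟨x, rfl⟩).isOfFinOrder hg.2⟩⟩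
  refine ⟨F, this, hF, isCyclic_map_mk'_of_forall_mem_iff τ fun g => ?_⟩
  simp [hF, hτ, Submonoid.isOfFinOrder_coe]

end

/-- Scott–Wall: a virtually cyclic group `G` (one containing a cyclic subgroup
of finite index) has a finite normal subgroup `F` such that `G/F` is trivial,
infinite cyclic, or infinite dihedral (`DihedralGroup 0`). -/
theorem stmt_4 (G : Type*) [Group G]
    (hvc : ∃ H : Subgroup G, IsCyclic H ∧ H.FiniteIndex) :
    ∃ (F : Subgroup G) (_ : F.Normal), Finite F ∧
      (Subsingleton (G ⧸ F) ∨
        Nonempty ((G ⧸ F) ≃* Multiplicative ℤ) ∨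
        Nonempty ((G ⧸ F) ≃* DihedralGroup 0)) := by
  rcases finite_or_infinite G with hG | hG
  · exact ⟨⊤, inferInstance, inferInstance, Or.inl QuotientGroup.subsingleton_quotient_top⟩
  obtain ⟨z, hz, _, _⟩ := exists_zpowers_normal_finiteIndex hvc
  obtain ⟨F, _, hF, _⟩ := exists_normal_mem_iff_mem_centralizer_isOfFinOrder hz
  refine ⟨F, ‹_›, finite_of_forall_isOfFinOrder (N := zpowers z)
    (fun x hx => eq_one_of_mem_zpowers_of_isOfFinOrder hz hx) (fun x hx => ((hF x).mp hx).2),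
    Or.inr ?_⟩
  set K := centralizer (zpowers z : Set G)
  set π := QuotientGroup.mk' F
  have hπ : Function.Surjective π := QuotientGroup.mk'_surjective F
  have : (K.map π).Normal := Normal.map inferInstance π hπ
  have hnotMem {g : G} (hg : π g ∉ K.map π) : g ∉ K := fun hgK => hg (mem_map_of_mem π hgK)
  refine nonempty_mulEquiv_int_or_dihedralGroup_zero (K.map π) (b := π z)
    (mem_map_of_mem π (mem_centralizer_zpowers_iff.mpr rfl)) (fun hfin => ?_) (fun q hq => ?_)
    (fun q q' hq hq' => ?_)
  · obtain ⟨n, hn, hzn⟩ := isOfFinOrder_iff_pow_eq_one.mp hfin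
    rw [← map_pow, QuotientGroup.mk'_apply, QuotientGroup.eq_one_iff, hF] at hzn
    exact hz (hzn.2.of_pow hn.ne')
  · obtain ⟨g, rfl⟩ := hπ q
    simp only [← map_inv, ← map_mul, conj_eq_inv_of_notMem_centralizer hz (hnotMem hq)]
  · obtain ⟨g, rfl⟩ := hπ q
    obtain ⟨g', rfl⟩ := hπ q'
    rw [← map_inv, ← map_mul]
    exact mem_map_of_mem π (inv_mul_mem_centralizer_of_notMem hz (hnotMem hq) (hnotMem hq'))
end

section
/- Let L be a group which is an extension 1 → T → L → G → 1 with T a finitely generated free abelian group and G finite, acting on T by conjugation. Then L admits a surjective homomorphism onto ℤ if and only if the fixed subgroup T^G is nonzero. -/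
/-- Let `L` be a group with a normal subgroup `T` of finite index (so `G = L/T`
is finite) such that `T` is finitely generated free abelian (`T ≅ ℤⁿ`).  Then
`L` maps onto `ℤ` if and only if the subgroup `T^G` of elements of `T` fixed by
the conjugation action is nontrivial. -/
theorem stmt_5 (L : Type*) [Group L] (T : Subgroup L) [T.Normal] [T.FiniteIndex]
    (n : ℕ) (hT : Nonempty (T ≃* Multiplicative (Fin n → ℤ))) :
    (∃ φ : L →* Multiplicative ℤ, Function.Surjective φ) ↔
      ∃ t ∈ T, t ≠ 1 ∧ ∀ l : L, l * t * l⁻¹ = t := by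
  obtain ⟨e⟩ := hT
  have hcomm : ∀ a b : T, a * b = b * a := fun a b =>
    e.injective (by rw [map_mul, map_mul, mul_comm])
  have hm0 : T.index ≠ 0 := Subgroup.FiniteIndex.index_ne_zero
  constructor
  · -- forward direction: a surjection onto ℤ gives a nontrivial fixed element
    rintro ⟨φ, hφ⟩
    letI := T.fintypeQuotientOfFiniteIndex
    letI : CommGroup ↥T := { (inferInstance : Group ↥T) with mul_comm := hcomm }
    obtain ⟨l, hl⟩ := hφ (Multiplicative.ofAdd 1)
    set m := T.index with hm
    set t : T := ⟨l ^ m, T.pow_index_mem l⟩ with ht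
    -- conjugation by a product with an element of `T` equals conjugation by the first factor
    have key : ∀ (a : L) (u x : T),
        MulAut.conjNormal (a * (u : L)) x = MulAut.conjNormal a x := by
      intro a u x
      apply Subtype.ext
      rw [MulAut.conjNormal_apply, MulAut.conjNormal_apply]
      have h1 : (u : L) * x * (u : L)⁻¹ = x := by
        rw [show (u : L) * x = x * u from congrArg Subtype.val (hcomm u x),
          mul_inv_cancel_right]
      rw [mul_inv_rev]
      calc a * ↑u * ↑x * ((↑u)⁻¹ * a⁻¹)
          = a * (↑u * ↑x * (↑u)⁻¹) * a⁻¹ := by group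
        _ = a * ↑x * a⁻¹ := by rw [h1]
    have key2 : ∀ (l' : L) (q : L ⧸ T) (x : T),
        MulAut.conjNormal (l' * q.out) x = MulAut.conjNormal (l' • q).out x := by
      intro l' q x
      have hmem : ((l' • q).out)⁻¹ * (l' * q.out) ∈ T := by
        have hq : (↑(l' * q.out) : L ⧸ T) = l' • q := by
          rw [show l' * q.out = l' • q.out from rfl, ← MulAction.Quotient.smul_mk,
            QuotientGroup.out_eq']
        rw [← QuotientGroup.eq, QuotientGroup.out_eq']
        exact hq.symm
      have : l' * q.out = (l' • q).out * (⟨_, hmem⟩ : T) := by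
        simp
      rw [this, key]
    set s : T := ∏ q : L ⧸ T, MulAut.conjNormal q.out t with hs
    -- compute φ of s
    have hφconj : ∀ q : L ⧸ T, φ ((MulAut.conjNormal q.out t : T) : L) = φ ↑t := by
      intro q
      rw [MulAut.conjNormal_apply, map_mul, map_mul, map_inv,
        mul_comm (φ q.out) (φ ↑t), mul_assoc, mul_inv_cancel, mul_one]
    have hφs : φ ↑s = (φ ↑t) ^ Fintype.card (L ⧸ T) := by
      have : φ ↑s = (φ.comp T.subtype) s := rfl
      rw [this, hs, map_prod]
      simp only [MonoidHom.comp_apply, Subgroup.coe_subtype]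
      rw [Finset.prod_congr rfl fun q _ => hφconj q, Finset.prod_const,
        Finset.card_univ]
    have hφt : φ ↑t = Multiplicative.ofAdd (m : ℤ) := by
      show φ (l ^ m) = _
      rw [map_pow, hl, ← ofAdd_nsmul]
      norm_num
    have hφs' : φ ↑s ≠ 1 := by
      rw [hφs, hφt, ← ofAdd_nsmul, Ne, ofAdd_eq_one]
      have hc : Fintype.card (L ⧸ T) ≠ 0 := Fintype.card_ne_zero
      simp only [nsmul_eq_mul]
      intro h
      rcases mul_eq_zero.mp h with h' | h'
      · exact hc (by exact_mod_cast h')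
      · exact hm0 (by exact_mod_cast h')
    refine ⟨(s : L), s.2, fun h => hφs' (by rw [h, map_one]), fun l' => ?_⟩
    have hinv : MulAut.conjNormal l' s = s := by
      rw [hs, map_prod]
      have step : ∀ q : L ⧸ T,
          MulAut.conjNormal l' (MulAut.conjNormal q.out t)
            = MulAut.conjNormal (l' • q).out t := by
        intro q
        rw [← MulAut.mul_apply, ← map_mul, key2]
      rw [Finset.prod_congr rfl fun q _ => step q]
      exact Fintype.prod_bijective (l' • ·) (MulAction.bijective l')
        _ _ (fun q => rfl)
    have := congrArg Subtype.val hinv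
    rwa [MulAut.conjNormal_apply] at this
  · -- backward direction: a nontrivial fixed element gives a surjection onto ℤ
    rintro ⟨t, htT, ht1, hfix⟩
    set τ : T := ⟨t, htT⟩ with hτ
    have hτ1 : τ ≠ 1 := fun h => ht1 (congrArg Subtype.val h)
    have heτ : (e τ).toAdd ≠ 0 := by
      intro h
      apply hτ1
      apply e.injective
      rw [map_one]
      exact Multiplicative.toAdd.injective h
    obtain ⟨i, hi⟩ := Function.ne_iff.mp heτ
    set ψ : Multiplicative (Fin n → ℤ) →* Multiplicative ℤ :=
      AddMonoidHom.toMultiplicative (Pi.evalAddMonoidHom (fun _ => ℤ) i) with hψ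
    set ϕ₀ : T →* Multiplicative ℤ := ψ.comp e.toMonoidHom with hϕ₀
    set Φ : L →* Multiplicative ℤ := ϕ₀.transfer with hΦ
    have hkey : ∀ (k : ℕ) (g₀ : L), g₀⁻¹ * t ^ k * g₀ ∈ T → g₀⁻¹ * t ^ k * g₀ = t ^ k := by
      intro k g₀ _
      have h1 : g₀⁻¹ * t * g₀ = t := by
        have := hfix g₀⁻¹
        rwa [inv_inv] at this
      calc g₀⁻¹ * t ^ k * g₀ = g₀⁻¹ * t ^ k * (g₀⁻¹)⁻¹ := by rw [inv_inv]
        _ = (g₀⁻¹ * t * (g₀⁻¹)⁻¹) ^ k := by rw [conj_pow]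
        _ = t ^ k := by rw [inv_inv, h1]
    have hΦt : Φ t ≠ 1 := by
      intro hcontra
      have h2 : ϕ₀ (τ ^ T.index) = 1 := by
        rw [← hcontra, hΦ, MonoidHom.transfer_eq_pow ϕ₀ t hkey]
        congr 1
      rw [map_pow] at h2
      have h3 : ϕ₀ τ = Multiplicative.ofAdd ((e τ).toAdd i) := rfl
      rw [h3, ← ofAdd_nsmul, ofAdd_eq_one] at h2
      simp only [nsmul_eq_mul] at h2
      rcases mul_eq_zero.mp h2 with h' | h'
      · exact hm0 (by exact_mod_cast h')
      · exact hi (by simpa using h')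
    -- the range of Φ is a nontrivial subgroup of ℤ, hence infinite cyclic
    set f : L → ℤ := fun x => (Φ x).toAdd with hf
    have hfmul : ∀ x y : L, f (x * y) = f x + f y := fun x y => by
      simp [hf, map_mul]
    have hfone : f 1 = 0 := by simp [hf]
    have hfinv : ∀ x : L, f x⁻¹ = -f x := fun x => by simp [hf]
    set R : AddSubgroup ℤ :=
      { carrier := Set.range f
        add_mem' := by
          rintro _ _ ⟨x, rfl⟩ ⟨y, rfl⟩
          exact ⟨x * y, hfmul x y⟩
        zero_mem' := ⟨1, hfone⟩
        neg_mem' := by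
          rintro _ ⟨x, rfl⟩
          exact ⟨x⁻¹, hfinv x⟩ } with hR
    obtain ⟨g, hg⟩ := Int.subgroup_cyclic R
    have hdvd : ∀ x : L, g ∣ f x := by
      intro x
      have hx : f x ∈ R := ⟨x, rfl⟩
      rw [hg, AddSubgroup.mem_closure_singleton] at hx
      obtain ⟨k, hk⟩ := hx
      exact ⟨k, by rw [← hk, zsmul_eq_mul, Int.cast_id, mul_comm]⟩
    have hft : f t ≠ 0 := fun h => hΦt (by
      rw [show Φ t = Multiplicative.ofAdd (f t) from rfl, h]; rfl)
    have hg0 : g ≠ 0 := by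
      rintro rfl
      exact hft (zero_dvd_iff.mp (hdvd t))
    have hgR : ∃ x : L, f x = g := by
      have : g ∈ R := by
        rw [hg]
        exact AddSubgroup.mem_closure_singleton.2 ⟨1, one_zsmul g⟩
      exact this
    obtain ⟨x₀, hx₀⟩ := hgR
    refine ⟨{ toFun := fun x => Multiplicative.ofAdd (f x / g)
              map_one' := by
                show Multiplicative.ofAdd (f 1 / g) = 1
                rw [hfone, Int.zero_ediv]; rfl
              map_mul' := by
                intro x y
                show Multiplicative.ofAdd (f (x * y) / g)
                  = Multiplicative.ofAdd (f x / g) * Multiplicative.ofAdd (f y / g)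
                rw [hfmul, Int.add_ediv_of_dvd_left (hdvd x)]
                rfl }, ?_⟩
    intro k
    refine ⟨x₀ ^ (k.toAdd), ?_⟩
    have hzpow : f (x₀ ^ (k.toAdd)) = k.toAdd * g := by
      show (Φ (x₀ ^ k.toAdd)).toAdd = k.toAdd * g
      rw [map_zpow, toAdd_zpow, show (Φ x₀).toAdd = g from hx₀, smul_eq_mul]
    show Multiplicative.ofAdd (f (x₀ ^ (k.toAdd)) / g) = k
    rw [hzpow, Int.mul_ediv_cancel _ hg0]
    exact ofAdd_toAdd k
end

section
/- Let k be an integral domain that is finitely generated as a ℤ-algebra, and let M be a maximal ideal of k. Then the residue field k/M is finite. -/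
/-!
`ℤ` is a Jacobson ring: its nonzero primes are maximal and its Jacobson radical is `0`. So the
field `k ⧸ M`, being of finite type over `ℤ`, is a finite `ℤ`-module. Then the kernel of
`ℤ → k ⧸ M` is a maximal ideal `(p)` (the extension is integral), and `k ⧸ M` is a
finite-dimensional vector space over the finite field `ℤ ⧸ (p)`.
-/

open Ideal

theorem isJacobsonRing_of_jacobson_bot {R : Type*} [CommRing R] [Ring.DimensionLEOne R]
    (h : (⊥ : Ideal R).jacobson = ⊥) : IsJacobsonRing R := by
  refine isJacobsonRing_iff_prime_eq.mpr fun {P} hP => ?_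
  rcases eq_or_ne P ⊥ with rfl | hP0
  · exact h
  · have := hP.isMaximal hP0
    exact jacobson_eq_self_of_isMaximal

theorem Int.jacobson_bot : (⊥ : Ideal ℤ).jacobson = ⊥ := by
  refine eq_bot_iff.mpr fun x hx => ?_
  -- take `y = x`: the unit `x * x + 1 ≥ 1` must be `1`
  rcases Int.isUnit_iff.mp (mem_jacobson_bot.mp hx x) with h | h <;>
    simp only [mem_bot] <;> nlinarith

instance Int.isJacobsonRing : IsJacobsonRing ℤ :=
  isJacobsonRing_of_jacobson_bot Int.jacobson_bot

theorem Ring.HasFiniteQuotients.finite_of_moduleFinite {R K : Type*} [CommRing R]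
    [Ring.HasFiniteQuotients R] (hR : ¬IsField R) [Field K] [Algebra R K] [Module.Finite R K] :
    Finite K := by
  have : Nontrivial R := (algebraMap R K).domain_nontrivial
  let P : Ideal K := ⊥
  have hP : (P.under R).IsMaximal := isMaximal_comap_of_isIntegral_of_isMaximal P
  have : Finite (R ⧸ P.under R) := finiteQuotient (Ring.ne_bot_of_isMaximal_of_not_isField hP hR)
  have : Module.Finite (R ⧸ P.under R) (K ⧸ P) := Module.Finite.of_restrictScalars_finite R _ _
  have : Finite (K ⧸ P) := Module.finite_of_finite (R ⧸ P.under R)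
  exact .of_equiv _ (RingEquiv.quotientBot K).toEquiv

theorem finite_quotient_of_finiteType {R A : Type*} [CommRing R] [IsJacobsonRing R]
    [Ring.HasFiniteQuotients R] (hR : ¬IsField R) [CommRing A] [Algebra R A]
    [Algebra.FiniteType R A] (M : Ideal A) [M.IsMaximal] : Finite (A ⧸ M) := by
  let := Quotient.field M
  have : Algebra.FiniteType R (A ⧸ M) := .of_surjective (Quotient.mkₐ R M) Quotient.mk_surjective
  have := finite_of_finite_type_of_isJacobsonRing R (A ⧸ M)
  exact Ring.HasFiniteQuotients.finite_of_moduleFinite hR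

theorem stmt_19_general (k : Type*) [CommRing k] [Algebra.FiniteType ℤ k]
    (M : Ideal k) (hM : M.IsMaximal) :
    Finite (k ⧸ M) :=
  finite_quotient_of_finiteType Int.not_isField M

/-- Generalized Nullstellensatz / Artin–Tate: if `k` is an integral domain,
finitely generated as a `ℤ`-algebra, and `M` is a maximal ideal of `k`, then
the residue field `k/M` is finite. -/
theorem stmt_19 (k : Type*) [CommRing k] [IsDomain k] [Algebra.FiniteType ℤ k]
    (M : Ideal k) (hM : M.IsMaximal) :
    Finite (k ⧸ M) :=
  stmt_19_general k M hM
end
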